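/- Let r ∈ {6, 7, 8} and let E_r be the graph on vertex set {1,…,r} whose edges are {1,3}, {3,4}, {2,4}, and {i, i+1} for 4 ≤ i ≤ r−1 (the Dynkin diagram of type E_r in Bourbaki numbering). Then the maximal total length of a multipath in E_r equals r(r+1)/2 − 2: every multipath in E_r has total length at most r(r+1)/2 − 2, and there exists a multipath in E_r of total length exactly r(r+1)/2 − 2. In particular this maximum is 19 for E_6, 26 for E_7, and 34 for E_8. (This is the combinatorial content of the paper's main theorem that the maximal degree of a multiplicity-free monomial in the Schubert divisor classes for a group of type E_r is r(r+1)/2 − 2.) -/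

import Mathlib

def IsMultipath {α : Type*} (G : SimpleGraph α) (ps : List (List α)) : Prop :=
  (∀ p ∈ ps, p ≠ [] ∧ p.Nodup ∧ p.Chain' G.Adj) ∧
  ps.Pairwise (fun p q => ∀ hp : p ≠ [], p.head hp ∉ q)

def multipathTotalLength {α : Type*} (ps : List (List α)) : ℕ :=
  (ps.map List.length).sum

def dynkinE (r : ℕ) : SimpleGraph (Fin r) :=
  SimpleGraph.fromRel (fun a b =>
    ((a : ℕ) = 0 ∧ (b : ℕ) = 2) ∨
    ((a : ℕ) = 2 ∧ (b : ℕ) = 3) ∨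
    ((a : ℕ) = 1 ∧ (b : ℕ) = 3) ∨
    ((a : ℕ) + 1 = (b : ℕ) ∧ 3 ≤ (a : ℕ)))

namespace DynkinEAux

lemma mtl_cons {α : Type*} (q : List α) (ps : List (List α)) :
    multipathTotalLength (q :: ps) = q.length + multipathTotalLength ps := by
  simp [multipathTotalLength]

instance (r : ℕ) : DecidableRel (dynkinE r).Adj := fun a b =>
  decidable_of_iff (a ≠ b ∧ _) (SimpleGraph.fromRel_adj _ a b).symm

/-- A `Decidable` instance for `List.Chain'` that reduces in the kernel. -/
def decChain' {α : Type*} (R : α → α → Prop) [DecidableRel R] :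
    (l : List α) → Decidable (List.Chain' R l)
  | [] => .isTrue List.isChain_nil
  | [a] => .isTrue (List.isChain_singleton a)
  | a :: b :: l =>
      @decidable_of_iff _ _ (List.isChain_cons_cons (a := a) (b := b) (l := l)).symm
        (@instDecidableAnd _ _ _ (decChain' R (b :: l)))

instance (priority := 2000) {α : Type*} (R : α → α → Prop) [DecidableRel R] (l : List α) :
    Decidable (List.Chain' R l) := decChain' R l

/-- Adjacency of `dynkinE` on underlying naturals. -/
lemma adj_cases {r : ℕ} {x y : Fin r} (h : (dynkinE r).Adj x y) :
    (x : ℕ) ≠ (y : ℕ) ∧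
    (((x : ℕ) = 0 ∧ (y : ℕ) = 2) ∨ ((x : ℕ) = 2 ∧ (y : ℕ) = 3) ∨
     ((x : ℕ) = 1 ∧ (y : ℕ) = 3) ∨ ((x : ℕ) + 1 = (y : ℕ) ∧ 3 ≤ (x : ℕ)) ∨
     ((y : ℕ) = 0 ∧ (x : ℕ) = 2) ∨ ((y : ℕ) = 2 ∧ (x : ℕ) = 3) ∨
     ((y : ℕ) = 1 ∧ (x : ℕ) = 3) ∨ ((y : ℕ) + 1 = (x : ℕ) ∧ 3 ≤ (y : ℕ))) := by
  rw [dynkinE, SimpleGraph.fromRel_adj] at h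
  refine ⟨fun hxy => h.1 (Fin.ext hxy), ?_⟩
  tauto

/-- the component of `v` in the graph with the trivalent vertex `3` removed. -/
def comp (v : ℕ) : ℕ := if v = 1 then 1 else if v ≤ 2 then 0 else 2

lemma adj_comp {r : ℕ} {x y : Fin r} (h : (dynkinE r).Adj x y)
    (hx : (x : ℕ) ≠ 3) (hy : (y : ℕ) ≠ 3) : comp x = comp y := by
  obtain ⟨-, h⟩ := adj_cases h
  unfold comp
  split_ifs <;> omega

lemma chain_comp_head {r : ℕ} :
    ∀ (t : List (Fin r)) (a : Fin r), List.Chain' (dynkinE r).Adj (a :: t) →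
    (∀ x ∈ a :: t, (x : ℕ) ≠ 3) → ∀ x ∈ t, comp x = comp a := by
  intro t
  induction t with
  | nil => intro a _ _ x hx; simp at hx
  | cons b t ih =>
    intro a hch h3 x hx
    have hab : (dynkinE r).Adj a b := (List.isChain_cons_cons.mp hch).1
    have hba : comp b = comp a :=
      (adj_comp hab (h3 a (by simp)) (h3 b (by simp))).symm
    rcases List.mem_cons.mp hx with rfl | hx
    · exact hba
    · have := ih b (List.isChain_cons_cons.mp hch).2 (fun z hz => h3 z (by
        rcases List.mem_cons.mp hz with rfl | hz
        · simp
        · simp [hz])) x hx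
      rw [this, hba]

lemma chain_comp_all {r : ℕ} (p : List (Fin r)) (hch : List.Chain' (dynkinE r).Adj p)
    (h3 : ∀ x ∈ p, (x : ℕ) ≠ 3) : ∀ x ∈ p, ∀ y ∈ p, comp x = comp y := by
  match p with
  | [] => intro x hx; simp at hx
  | a :: t =>
    intro x hx y hy
    have hx' : comp x = comp a := by
      rcases List.mem_cons.mp hx with rfl | hx
      · rfl
      · exact chain_comp_head t a hch h3 x hx
    have hy' : comp y = comp a := by
      rcases List.mem_cons.mp hy with rfl | hy
      · rfl
      · exact chain_comp_head t a hch h3 y hy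
    rw [hx', hy']

/-- Pigeonhole: a simple path through the trivalent vertex `3` can meet only
two of the three components, so cannot contain vertices of all three. -/
lemma pigeon {r : ℕ} (hr : 4 ≤ r) (p : List (Fin r))
    (hch : List.Chain' (dynkinE r).Adj p) (hnd : p.Nodup)
    (h3mem : (⟨3, by omega⟩ : Fin r) ∈ p)
    (a b d : Fin r) (hma : a ∈ p) (hmb : b ∈ p) (hmd : d ∈ p)
    (h3a : (a : ℕ) ≠ 3) (h3b : (b : ℕ) ≠ 3) (h3d : (d : ℕ) ≠ 3)
    (hab : comp a ≠ comp b) (had : comp a ≠ comp d) (hbd : comp b ≠ comp d) :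
    False := by
  obtain ⟨u, w, rfl⟩ := List.append_of_mem h3mem
  set v3 : Fin r := (⟨3, by omega⟩ : Fin r) with hv3
  have hnd' := hnd
  rw [List.nodup_append] at hnd'
  obtain ⟨hndu, hndvw, hdisj⟩ := hnd'
  have h3u : v3 ∉ u := fun h => hdisj v3 h v3 (by simp) rfl
  have h3w : v3 ∉ w := (List.nodup_cons.mp hndvw).1
  have hchu : List.Chain' (dynkinE r).Adj u :=
    (List.isChain_append.mp hch).1
  have hchw : List.Chain' (dynkinE r).Adj w :=
    ((List.isChain_append.mp hch).2.1).tail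
  have hu3 : ∀ x ∈ u, (x : ℕ) ≠ 3 := by
    intro x hx h
    exact h3u (by rwa [show x = v3 from Fin.ext h] at hx)
  have hw3 : ∀ x ∈ w, (x : ℕ) ≠ 3 := by
    intro x hx h
    exact h3w (by rwa [show x = v3 from Fin.ext h] at hx)
  have hcu := chain_comp_all u hchu hu3
  have hcw := chain_comp_all w hchw hw3
  have hsplit : ∀ x : Fin r, x ∈ u ++ v3 :: w → (x : ℕ) ≠ 3 → x ∈ u ∨ x ∈ w := by
    intro x hx hne
    rcases List.mem_append.mp hx with h | h
    · exact Or.inl h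
    · rcases List.mem_cons.mp h with rfl | h
      · exact absurd rfl hne
      · exact Or.inr h
  rcases hsplit a hma h3a with ha | ha <;>
    rcases hsplit b hmb h3b with hb | hb <;>
      rcases hsplit d hmd h3d with hd | hd
  · exact hab (hcu a ha b hb)
  · exact hab (hcu a ha b hb)
  · exact had (hcu a ha d hd)
  · exact hbd (hcw b hb d hd)
  · exact hbd (hcu b hb d hd)
  · exact had (hcw a ha d hd)
  · exact hab (hcw a ha b hb)
  · exact hab (hcw a ha b hb)

/-- A nodup list avoiding a finset `T` has length at most `r - T.card`. -/
lemma nodup_avoid_length {r : ℕ} (p : List (Fin r)) (hnd : p.Nodup)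
    (T : Finset (Fin r)) (hT : ∀ x ∈ p, x ∉ T) :
    p.length + T.card ≤ r := by
  have hdisj : Disjoint p.toFinset T := by
    rw [Finset.disjoint_left]
    intro x hx
    exact hT x (List.mem_toFinset.mp hx)
  have hcard : (p.toFinset ∪ T).card = p.length + T.card := by
    rw [Finset.card_union_of_disjoint hdisj, List.toFinset_card_of_nodup hnd]
  calc p.length + T.card = (p.toFinset ∪ T).card := hcard.symm
    _ ≤ Fintype.card (Fin r) := Finset.card_le_univ _
    _ = r := Fintype.card_fin r

/-- `E_r` has no Hamiltonian path: every simple path misses a vertex. -/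
lemma no_ham {r : ℕ} (hr : 6 ≤ r) (p : List (Fin r))
    (hch : List.Chain' (dynkinE r).Adj p) (hnd : p.Nodup) :
    p.length ≤ r - 1 := by
  by_contra hlen
  push_neg at hlen
  have hle : p.length ≤ r := by
    have := hnd.length_le_card
    simpa using this
  have hlen' : p.length = r := by omega
  have huniv : p.toFinset = Finset.univ := by
    apply Finset.eq_univ_of_card
    rw [List.toFinset_card_of_nodup hnd, hlen', Fintype.card_fin]
  have hmem : ∀ v : Fin r, v ∈ p := by
    intro v
    rw [← List.mem_toFinset, huniv]
    exact Finset.mem_univ v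
  exact pigeon (by omega) p hch hnd (hmem _)
    ⟨0, by omega⟩ ⟨1, by omega⟩ ⟨4, by omega⟩
    (hmem _) (hmem _) (hmem _)
    (by simp) (by simp) (by simp)
    (by simp [comp]) (by simp [comp]) (by simp [comp])

/-- A simple path starting at the Bourbaki vertex `2` (our index `1`) misses
at least two vertices. -/
lemma start_v1 {r : ℕ} (hr : 6 ≤ r) (p : List (Fin r))
    (hch : List.Chain' (dynkinE r).Adj p) (hnd : p.Nodup)
    (hne : p ≠ []) (hhead : ((p.head hne : Fin r) : ℕ) = 1) :
    p.length ≤ r - 2 := by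
  match p with
  | a :: rest =>
    have ha1 : (a : ℕ) = 1 := hhead
    match rest with
    | [] => simp; omega
    | x :: t =>
      have hax : (dynkinE r).Adj a x := (List.isChain_cons_cons.mp hch).1
      have hx3 : (x : ℕ) = 3 := by
        obtain ⟨hne', hcase⟩ := adj_cases hax
        omega
      match t with
      | [] => simp; omega
      | y :: t' =>
        -- t = y :: t' is a chain avoiding vertices 1 and 3
        have hcht : List.Chain' (dynkinE r).Adj (y :: t') :=
          ((List.isChain_cons_cons.mp hch).2).tail
        have hnd1 : a ∉ x :: y :: t' := (List.nodup_cons.mp hnd).1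
        have hndt : (y :: t').Nodup :=
          (List.nodup_cons.mp (List.nodup_cons.mp hnd).2).2
        have hxnot : x ∉ y :: t' := (List.nodup_cons.mp (List.nodup_cons.mp hnd).2).1
        have ht3 : ∀ z ∈ y :: t', (z : ℕ) ≠ 3 := by
          intro z hz h3
          exact hxnot (by rwa [show z = x from Fin.ext (by omega)] at hz)
        have ht1 : ∀ z ∈ y :: t', (z : ℕ) ≠ 1 := by
          intro z hz h1
          exact hnd1 (by
            have : z = a := Fin.ext (by omega)
            exact this ▸ (List.mem_cons_of_mem x hz))
        have hcc := chain_comp_all (y :: t') hcht ht3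
        -- all elements of y :: t' lie in the component of y
        rcases Nat.lt_or_ge (y : ℕ) 3 with hy | hy
        · -- component {0, 2}: at most 2 vertices
          have hcompy : comp y = 0 := by
            have := ht1 y (by simp)
            unfold comp
            split_ifs <;> omega
          have hsub : (y :: t').toFinset ⊆ {⟨0, by omega⟩, ⟨2, by omega⟩} := by
            intro z hz
            have hzmem := List.mem_toFinset.mp hz
            have hcz : comp z = 0 := by rw [hcc z hzmem y (by simp), hcompy]
            have hz1 := ht1 z hzmem
            have : (z : ℕ) = 0 ∨ (z : ℕ) = 2 := by
              unfold comp at hcz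
              split_ifs at hcz <;> omega
            rcases this with h | h
            · exact Finset.mem_insert.mpr (Or.inl (Fin.ext h))
            · exact Finset.mem_insert.mpr (Or.inr (Finset.mem_singleton.mpr (Fin.ext h)))
          have hlen2 : (y :: t').length ≤ 2 := by
            rw [← List.toFinset_card_of_nodup hndt]
            calc (y :: t').toFinset.card ≤ ({⟨0, by omega⟩, ⟨2, by omega⟩} :
                Finset (Fin r)).card := Finset.card_le_card hsub
              _ ≤ 2 := by
                  apply le_trans (Finset.card_insert_le _ _)
                  simp
          simp only [List.length_cons] at hlen2 ⊢
          omega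
        · -- component {4, …, r-1}: avoids 0,1,2,3
          have hge4 : ∀ z ∈ y :: t', 4 ≤ (z : ℕ) := by
            intro z hz
            have hcz : 3 ≤ (z : ℕ) := by
              have hcy : comp y = 2 := by unfold comp; split_ifs <;> omega
              have hcz2 : comp z = 2 := by rw [hcc z hz y (by simp), hcy]
              unfold comp at hcz2
              split_ifs at hcz2 <;> omega
            have := ht3 z hz
            omega
          -- the path avoids 0,1,2,3, so its length is at most r - 4
          have hTcard : ({(⟨0, by omega⟩ : Fin r), ⟨1, by omega⟩, ⟨2, by omega⟩,
              ⟨3, by omega⟩} : Finset (Fin r)).card = 4 := by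
            rw [Finset.card_insert_of_notMem (by simp),
              Finset.card_insert_of_notMem (by simp),
              Finset.card_insert_of_notMem (by simp), Finset.card_singleton]
          have havoid : ∀ z ∈ y :: t', z ∉ ({(⟨0, by omega⟩ : Fin r), ⟨1, by omega⟩,
              ⟨2, by omega⟩, ⟨3, by omega⟩} : Finset (Fin r)) := by
            intro z hz hmemT
            have h4 := hge4 z hz
            rcases Finset.mem_insert.mp hmemT with rfl | hmemT
            · simp at h4
            rcases Finset.mem_insert.mp hmemT with rfl | hmemT
            · simp at h4
            rcases Finset.mem_insert.mp hmemT with rfl | hmemT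
            · simp at h4
            rw [Finset.mem_singleton] at hmemT
            subst hmemT
            simp at h4
          have := nodup_avoid_length (y :: t') hndt _ havoid
          rw [hTcard] at this
          simp only [List.length_cons] at this ⊢
          omega

/-- If a simple path avoids a vertex other than Bourbaki's vertex `2`
(our index `1`), it misses yet another vertex. -/
lemma avoid_ne1 {r : ℕ} (hr : 6 ≤ r) (p : List (Fin r))
    (hch : List.Chain' (dynkinE r).Adj p) (hnd : p.Nodup)
    (i : Fin r) (hi : (i : ℕ) ≠ 1) (hip : i ∉ p) :
    p.length ≤ r - 2 := by
  by_contra hlen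
  push_neg at hlen
  have hle : p.length + 1 ≤ r := by
    have := nodup_avoid_length p hnd {i} (fun x hx hxi =>
      hip ((Finset.mem_singleton.mp hxi) ▸ hx))
    simpa using this
  have hlen' : p.length = r - 1 := by omega
  -- p covers every vertex except i
  have hmem : ∀ v : Fin r, v ≠ i → v ∈ p := by
    intro v hv
    have hsub : p.toFinset ⊆ Finset.univ.erase i := by
      intro z hz
      exact Finset.mem_erase.mpr ⟨fun h => hip (h ▸ List.mem_toFinset.mp hz),
        Finset.mem_univ z⟩
    have hcards : (Finset.univ.erase i).card ≤ p.toFinset.card := by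
      rw [Finset.card_erase_of_mem (Finset.mem_univ i),
        List.toFinset_card_of_nodup hnd, hlen']
      simp
    have heq : p.toFinset = Finset.univ.erase i :=
      Finset.eq_of_subset_of_card_le hsub hcards
    rw [← List.mem_toFinset, heq]
    exact Finset.mem_erase.mpr ⟨hv, Finset.mem_univ v⟩
  rcases eq_or_ne (i : ℕ) 3 with hi3 | hi3
  · -- i = 3 : the path avoids the trivalent vertex, so stays in one component
    have hp3 : ∀ x ∈ p, (x : ℕ) ≠ 3 := by
      intro x hx h3
      exact hip (by rwa [show x = i from Fin.ext (by omega)] at hx)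
    have hcc := chain_comp_all p hch hp3
    have h0 : (⟨0, by omega⟩ : Fin r) ∈ p := hmem _ (by
      intro h; exact absurd (congrArg Fin.val h) (by simp; omega))
    have h1 : (⟨1, by omega⟩ : Fin r) ∈ p := hmem _ (by
      intro h; exact absurd (congrArg Fin.val h) (by simp; omega))
    have := hcc _ h0 _ h1
    simp [comp] at this
  · -- i ≠ 3 : vertex 3 is on the path, use the three components
    have h3mem : (⟨3, by omega⟩ : Fin r) ∈ p := hmem _ (by
      intro h; exact absurd (congrArg Fin.val h) (by simp; omega))
    -- representative of component 0
    obtain ⟨a, hma, ha3, hca⟩ : ∃ a : Fin r, a ∈ p ∧ (a : ℕ) ≠ 3 ∧ comp a = 0 := by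
      rcases eq_or_ne (i : ℕ) 0 with h0 | h0
      · exact ⟨⟨2, by omega⟩, hmem _ (by
          intro h; exact absurd (congrArg Fin.val h) (by simp; omega)),
          by simp, by simp [comp]⟩
      · exact ⟨⟨0, by omega⟩, hmem _ (by
          intro h; exact absurd (congrArg Fin.val h) (by simp; omega)),
          by simp, by simp [comp]⟩
    -- representative of component 2
    obtain ⟨d, hmd, hd3, hcd⟩ : ∃ d : Fin r, d ∈ p ∧ (d : ℕ) ≠ 3 ∧ comp d = 2 := by
      rcases eq_or_ne (i : ℕ) 4 with h4 | h4
      · exact ⟨⟨5, by omega⟩, hmem _ (by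
          intro h; exact absurd (congrArg Fin.val h) (by simp; omega)),
          by simp, by simp [comp]⟩
      · exact ⟨⟨4, by omega⟩, hmem _ (by
          intro h; exact absurd (congrArg Fin.val h) (by simp; omega)),
          by simp, by simp [comp]⟩
    have h1 : (⟨1, by omega⟩ : Fin r) ∈ p := hmem _ (by
      intro h; exact absurd (congrArg Fin.val h) (by simp; omega))
    exact pigeon (by omega) p hch hnd h3mem a ⟨1, by omega⟩ d hma h1 hmd
      ha3 (by simp) hd3
      (by rw [hca]; norm_num [comp]) (by rw [hca, hcd]; norm_num)
      (by rw [hcd]; norm_num [comp])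

/-- General counting bound: a multipath avoiding a set `T` has total length
at most `(r - |T|)(r - |T| + 1)/2` (stated doubled). -/
lemma gen_bound {r : ℕ} :
    ∀ (ps : List (List (Fin r))) (T : Finset (Fin r)),
    IsMultipath (dynkinE r) ps →
    (∀ q ∈ ps, ∀ x ∈ q, x ∉ T) →
    2 * multipathTotalLength ps ≤ (r - T.card) * (r - T.card + 1) := by
  intro ps
  induction ps with
  | nil => intro T _ _; simp [multipathTotalLength]
  | cons q rest ih =>
    intro T hmp hT
    obtain ⟨hq, hpair⟩ := hmp
    have hqne : q ≠ [] := (hq q (by simp)).1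
    have hqnd : q.Nodup := (hq q (by simp)).2.1
    set x := q.head hqne with hx
    have hxq : x ∈ q := List.head_mem hqne
    have hxT : x ∉ T := hT q (by simp) x hxq
    have hlenq : q.length + T.card ≤ r :=
      nodup_avoid_length q hqnd T (hT q (by simp))
    have hlenq1 : 1 ≤ q.length := by
      cases q
      · exact absurd rfl hqne
      · simp
    have hcard' : (insert x T).card = T.card + 1 := Finset.card_insert_of_notMem hxT
    have hrest : 2 * multipathTotalLength rest ≤
        (r - (insert x T).card) * (r - (insert x T).card + 1) := by
      apply ih (insert x T)
        ⟨fun p hp => hq p (by simp [hp]), (List.pairwise_cons.mp hpair).2⟩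
      intro p hp y hy hyT
      rcases Finset.mem_insert.mp hyT with rfl | hyT
      · exact ((List.pairwise_cons.mp hpair).1 p hp hqne) hy
      · exact hT p (by simp [hp]) y hy hyT
    obtain ⟨m, hm⟩ : ∃ m, r - T.card = m + 1 := ⟨r - T.card - 1, by omega⟩
    have hm' : r - (insert x T).card = m := by omega
    rw [hm'] at hrest
    rw [mtl_cons, hm]
    have hqm : q.length ≤ m + 1 := by omega
    nlinarith [hrest, hqm]

/-- The doubled upper bound for multipaths in `E_r`. -/
lemma upper {r : ℕ} (hr : 6 ≤ r) (ps : List (List (Fin r)))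
    (h : IsMultipath (dynkinE r) ps) :
    2 * multipathTotalLength ps ≤ r * (r + 1) - 4 := by
  obtain ⟨s, rfl⟩ : ∃ s, r = s + 6 := ⟨r - 6, by omega⟩
  have hprod : (s + 6) * (s + 6 + 1) = s * s + 13 * s + 42 := by ring
  rw [hprod, show s * s + 13 * s + 42 - 4 = s * s + 13 * s + 38 from by
    rw [Nat.add_sub_assoc (by norm_num)]]
  match ps with
  | [] =>
    simp [multipathTotalLength]
  | p1 :: rest =>
    obtain ⟨hforall, hpair⟩ := h
    have hp1 := hforall p1 (by simp)
    obtain ⟨hp1ne, hp1nd, hp1ch⟩ := hp1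
    set i1 := p1.head hp1ne with hi1def
    have hi1p1 : i1 ∈ p1 := List.head_mem hp1ne
    have hrestmp : IsMultipath (dynkinE (s + 6)) rest :=
      ⟨fun q hq => hforall q (by simp [hq]), (List.pairwise_cons.mp hpair).2⟩
    have hrest_avoid : ∀ q ∈ rest, ∀ y ∈ q, y ∉ ({i1} : Finset _) := by
      intro q hq y hy hyi
      rw [Finset.mem_singleton] at hyi
      exact ((List.pairwise_cons.mp hpair).1 q hq hp1ne) (by rwa [hyi] at hy)
    have hgen1 : 2 * multipathTotalLength rest ≤ (s + 5) * (s + 6) := by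
      have := gen_bound rest {i1} hrestmp hrest_avoid
      have e1 : s + 6 - ({i1} : Finset _).card = s + 5 := by
        rw [Finset.card_singleton]; omega
      rw [e1] at this
      calc 2 * multipathTotalLength rest ≤ (s + 5) * (s + 5 + 1) := this
        _ = (s + 5) * (s + 6) := by ring_nf
    have hlen1 : p1.length ≤ s + 5 := by
      have := no_ham hr p1 hp1ch hp1nd
      omega
    rw [mtl_cons]
    by_cases hcase : p1.length ≤ s + 4
    · nlinarith [hgen1]
    · have hlen1' : p1.length = s + 5 := by omega
      have hi1ne1 : (i1 : ℕ) ≠ 1 := by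
        intro h1
        have := start_v1 hr p1 hp1ch hp1nd hp1ne h1
        omega
      match rest with
      | [] =>
        simp [multipathTotalLength]
        nlinarith
      | p2 :: rest2 =>
        have hp2 := hforall p2 (by simp)
        obtain ⟨hp2ne, hp2nd, hp2ch⟩ := hp2
        have hi1p2 : i1 ∉ p2 :=
          (List.pairwise_cons.mp hpair).1 p2 (by simp) hp1ne
        have hlen2 : p2.length ≤ s + 4 := by
          have := avoid_ne1 hr p2 hp2ch hp2nd i1 hi1ne1 hi1p2
          omega
        set i2 := p2.head hp2ne with hi2def
        have hi2p2 : i2 ∈ p2 := List.head_mem hp2ne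
        have hi12 : i1 ≠ i2 := fun h => hi1p2 (h ▸ hi2p2)
        have hrest2_avoid : ∀ q ∈ rest2, ∀ y ∈ q,
            y ∉ ({i1, i2} : Finset _) := by
          intro q hq y hy hyi
          rcases Finset.mem_insert.mp hyi with rfl | hyi
          · exact ((List.pairwise_cons.mp hpair).1 q (by simp [hq]) hp1ne) hy
          · rw [Finset.mem_singleton] at hyi
            have := (List.pairwise_cons.mp (List.pairwise_cons.mp hpair).2).1 q hq hp2ne
            exact this (by rwa [hyi] at hy)
        have hrest2mp : IsMultipath (dynkinE (s + 6)) rest2 :=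
          ⟨fun q hq => hforall q (by simp [hq]),
            (List.pairwise_cons.mp (List.pairwise_cons.mp hpair).2).2⟩
        have hgen2 : 2 * multipathTotalLength rest2 ≤ (s + 4) * (s + 5) := by
          have := gen_bound rest2 {i1, i2} hrest2mp hrest2_avoid
          have e2 : s + 6 - ({i1, i2} : Finset _).card = s + 4 := by
            rw [Finset.card_insert_of_notMem (by simpa using hi12),
              Finset.card_singleton]
            omega
          rw [e2] at this
          calc 2 * multipathTotalLength rest2 ≤ (s + 4) * (s + 4 + 1) := this
            _ = (s + 4) * (s + 5) := by ring_nf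
        rw [mtl_cons]
        nlinarith [hgen2]

end DynkinEAux

set_option maxRecDepth 40000 in
open DynkinEAux in
/-- For `r ∈ {6,7,8}`, the maximal total length of a multipath in the Dynkin
diagram of type `E_r` equals `r(r+1)/2 - 2` (that is, `19` for `E₆`, `26` for
`E₇`, `34` for `E₈`). -/
theorem dynkinE_max_multipath (r : ℕ) (hr : r = 6 ∨ r = 7 ∨ r = 8) :
    (∀ ps : List (List (Fin r)), IsMultipath (dynkinE r) ps →
      multipathTotalLength ps ≤ r * (r + 1) / 2 - 2) ∧
    (∃ ps : List (List (Fin r)), IsMultipath (dynkinE r) ps ∧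
      multipathTotalLength ps = r * (r + 1) / 2 - 2) := by
  rcases hr with rfl | rfl | rfl
  · constructor
    · intro ps hps
      have h2 := upper (by norm_num) ps hps
      norm_num at h2 ⊢
      omega
    · refine ⟨[[0,2,3,4,5],[1,3,4,5],[2,3,4,5],[3,4,5],[4,5],[5]], ?_, by decide⟩
      refine ⟨by decide, by decide⟩
  · constructor
    · intro ps hps
      have h2 := upper (by norm_num) ps hps
      norm_num at h2 ⊢
      omega
    · refine ⟨[[0,2,3,4,5,6],[1,3,4,5,6],[2,3,4,5,6],[3,4,5,6],[4,5,6],[5,6],[6]], ?_, by decide⟩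
      refine ⟨by decide, by decide⟩
  · constructor
    · intro ps hps
      have h2 := upper (by norm_num) ps hps
      norm_num at h2 ⊢
      omega
    · refine ⟨[[0,2,3,4,5,6,7],[1,3,4,5,6,7],[2,3,4,5,6,7],[3,4,5,6,7],[4,5,6,7],[5,6,7],[6,7],[7]], ?_, by decide⟩
      refine ⟨by decide, by decide⟩
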